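/- If a threshold graph G is hamiltonian and e is a key edge such that the degree-partition inequalities of Golumbic's hamiltonicity criterion still hold for G − e, then G − e has strictly fewer Hamilton cycles than G. -/

import Mathlib

open SimpleGraph Finset

/-- A threshold graph: there exist a nonnegative vertex weight function and a
nonnegative threshold `t` such that distinct vertices are adjacent iff the sum
of their weights exceeds `t`. -/
def SimpleGraph.IsThreshold {V : Type} (G : SimpleGraph V) : Prop :=
  ∃ (f : V → ℝ) (t : ℝ), (∀ v, 0 ≤ f v) ∧ 0 ≤ t ∧
    ∀ u v : V, u ≠ v → (G.Adj u v ↔ f u + f v > t)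

/-- Degree of a vertex (no decidability assumptions). -/
noncomputable def SimpleGraph.deg {V : Type} [Fintype V] (G : SimpleGraph V) (v : V) : ℕ :=
  Nat.card {u // G.Adj v u}

/-- `δ 0 = 0 < δ 1 < ⋯ < δ m` are exactly the degrees occurring in `G`;
the degree partition of `G` is `D_i = {v : deg v = δ i}`, `i = 0, …, m`. -/
structure SimpleGraph.DegreePartition {V : Type} [Fintype V] (G : SimpleGraph V)
    (m : ℕ) (δ : ℕ → ℕ) : Prop where
  zero : δ 0 = 0
  mono : ∀ i j, i < j → j ≤ m → δ i < δ j
  cover : ∀ v : V, ∃ i ≤ m, G.deg v = δ i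
  attained : ∀ i, 1 ≤ i → i ≤ m → ∃ v : V, G.deg v = δ i

/-- The degree set `D_i` of the degree partition. -/
noncomputable def SimpleGraph.Dset {V : Type} [Fintype V] (G : SimpleGraph V)
    (δ : ℕ → ℕ) (i : ℕ) : Finset V :=
  Finset.univ.filter (fun v => G.deg v = δ i)

/-- A key edge of a threshold graph with degree partition `D_0, …, D_m`: an edge
joining `D_k` and `D_{m+1-k}` for some `1 ≤ k ≤ ⌈m/2⌉`. -/
def SimpleGraph.IsKeyEdge {V : Type} [Fintype V] (G : SimpleGraph V)
    (m : ℕ) (δ : ℕ → ℕ) (e : Sym2 V) : Prop :=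
  e ∈ G.edgeSet ∧ ∃ x y k, e = s(x, y) ∧ 1 ≤ k ∧ k ≤ (m + 1) / 2 ∧
    G.deg x = δ k ∧ G.deg y = δ (m + 1 - k)

/-- The number of Hamilton cycles of `G`, counted as unordered spanning cycles
(a cycle is identified with its edge set). -/
noncomputable def SimpleGraph.hamCycleCount {V : Type} [Fintype V] [DecidableEq V]
    (G : SimpleGraph V) : ℕ :=
  Nat.card {s : Finset (Sym2 V) // ∃ (v : V) (w : G.Walk v v),
    w.IsHamiltonianCycle ∧ w.edges.toFinset = s}

/-- The multiset of degrees of `G`. -/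
noncomputable def SimpleGraph.degMultiset {V : Type} [Fintype V] (G : SimpleGraph V) :
    Multiset ℕ :=
  Finset.univ.val.map G.deg

/-- The degree sequence `n-1, n-1, n-2, …, ⌈n/2⌉, ⌈n/2⌉, …, 3, 2` of the graph `Gₙ`,
as a multiset: the values `2, …, n-1` together with an extra copy of `⌈n/2⌉` and of `n-1`. -/
def gnDegSeq (n : ℕ) : Multiset ℕ :=
  (Multiset.range (n - 2)).map (· + 2) + {(n + 1) / 2, n - 1}

/-- An independent set in a graph. -/
def SimpleGraph.IsIndepSet' {V : Type} (G : SimpleGraph V) (S : Set V) : Prop :=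
  ∀ u ∈ S, ∀ v ∈ S, u ≠ v → ¬ G.Adj u v

/-
In a threshold graph the neighbourhoods are nested: a vertex `v` of positive degree is adjacent
exactly to the other vertices whose degree is at least `μ v`, the least degree of a neighbour of
`v`, and `μ` strictly decreases as the degree grows. Running down the classes `D_m, …, D_1` this
forces every neighbour of a vertex of `D_k` into `D_{m+1-k} ∪ ⋯ ∪ D_m`. For a key edge `xy` with
`x ∈ D_k`, `y ∈ D_{m+1-k}` it follows that any neighbour `a` of `y` and any other neighbour `b` of
`x` are adjacent, so a Hamilton cycle `y a ⋯ x b ⋯ y` avoiding `xy` can be rerouted into the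
Hamilton cycle `y x ⋯ a b ⋯ y`. Some Hamilton cycle of `G` thus uses `e`; it is not one of
`G - e`, whereas every Hamilton cycle of `G - e` is one of `G`.
-/

namespace SimpleGraph

section Threshold

variable {V : Type} [Fintype V] {G : SimpleGraph V}

lemma deg_eq_degree [DecidableRel G.Adj] (v : V) : G.deg v = G.degree v := by
  rw [deg, ← card_neighborSet_eq_degree, Nat.card_eq_fintype_card]
  rfl

lemma deg_pos_of_adj {v u : V} (h : G.Adj v u) : 0 < G.deg v := by
  classical
  exact G.deg_eq_degree v ▸ G.degree_pos_iff_exists_adj v |>.2 ⟨u, h⟩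

lemma exists_adj_of_deg_pos {v : V} (h : 0 < G.deg v) : ∃ u, G.Adj v u := by
  classical
  exact (G.degree_pos_iff_exists_adj v).1 (G.deg_eq_degree v ▸ h)

lemma card_neighborFinset_erase_le_iff [DecidableEq V] [DecidableRel G.Adj] (v w : V) :
    #((G.neighborFinset w).erase v) ≤ #((G.neighborFinset v).erase w) ↔ G.deg w ≤ G.deg v := by
  simp only [card_erase_eq_ite, mem_neighborFinset, card_neighborFinset_eq_degree,
    deg_eq_degree, G.adj_comm w v]
  split_ifs with h
  · have := (G.degree_pos_iff_exists_adj v).2 ⟨w, h⟩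
    have := (G.degree_pos_iff_exists_adj w).2 ⟨v, h.symm⟩
    omega
  · rfl

lemma IsThreshold.adj_of_deg_le (hG : G.IsThreshold) {u u' w : V} (huw : G.Adj u w)
    (hdeg : G.deg u ≤ G.deg u') (hu'w : u' ≠ w) : G.Adj u' w := by
  classical
  obtain ⟨f, t, -, -, hft⟩ := hG
  have adj_of_weight_le : ∀ {u u' w}, f u ≤ f u' → G.Adj u w → u' ≠ w → G.Adj u' w :=
    fun hf h hw => (hft _ _ hw).2 (by linarith [(hft _ _ h.ne).1 h])
  rcases le_or_gt (f u) (f u') with hf | hf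
  · exact adj_of_weight_le hf huw hu'w
  · -- `u'` is lighter than `u`; the degree bound turns this inclusion into an equality.
    have hsub : (G.neighborFinset u').erase u ⊆ (G.neighborFinset u).erase u' := by
      intro z hz
      simp only [mem_erase, mem_neighborFinset] at hz ⊢
      exact ⟨hz.2.ne.symm, adj_of_weight_le hf.le hz.2 hz.1.symm⟩
    have heq := eq_of_subset_of_card_le hsub ((card_neighborFinset_erase_le_iff u' u).2 hdeg)
    have hw : w ∈ (G.neighborFinset u).erase u' := by simp [huw, hu'w.symm]
    rw [← heq, mem_erase, mem_neighborFinset] at hw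
    exact hw.2

-- `0` for an isolated vertex, since `sInf ∅ = 0`.
noncomputable def minNeighborDeg (G : SimpleGraph V) (v : V) : ℕ :=
  sInf {d | ∃ u, G.Adj v u ∧ G.deg u = d}

lemma minNeighborDeg_le {v u : V} (h : G.Adj v u) : G.minNeighborDeg v ≤ G.deg u :=
  Nat.sInf_le ⟨u, h, rfl⟩

lemma exists_adj_deg_eq_minNeighborDeg {v : V} (hv : 0 < G.deg v) :
    ∃ u, G.Adj v u ∧ G.deg u = G.minNeighborDeg v :=
  let ⟨u, h⟩ := exists_adj_of_deg_pos hv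
  Nat.sInf_mem (s := {d | ∃ u, G.Adj v u ∧ G.deg u = d}) ⟨_, u, h, rfl⟩

lemma IsThreshold.adj_iff_minNeighborDeg_le (hG : G.IsThreshold) {v z : V} (hv : 0 < G.deg v)
    (hz : z ≠ v) : G.Adj v z ↔ G.minNeighborDeg v ≤ G.deg z := by
  refine ⟨minNeighborDeg_le, fun hle => ?_⟩
  obtain ⟨u, hvu, hu⟩ := exists_adj_deg_eq_minNeighborDeg hv
  exact (hG.adj_of_deg_le hvu.symm (hu ▸ hle) hz).symm

lemma IsThreshold.minNeighborDeg_lt_of_deg_lt (hG : G.IsThreshold) {v w : V}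
    (hv : 0 < G.deg v) (hvw : G.deg v < G.deg w) : G.minNeighborDeg w < G.minNeighborDeg v := by
  classical
  by_contra! hle
  have hsub : (G.neighborFinset w).erase v ⊆ (G.neighborFinset v).erase w := by
    intro z hz
    simp only [mem_erase, mem_neighborFinset] at hz ⊢
    exact ⟨hz.2.ne.symm,
      (hG.adj_iff_minNeighborDeg_le hv hz.1).2 (hle.trans (minNeighborDeg_le hz.2))⟩
  exact hvw.not_ge ((card_neighborFinset_erase_le_iff v w).1 (card_le_card hsub))

namespace DegreePartition

variable {m : ℕ} {δ : ℕ → ℕ} (hdp : G.DegreePartition m δ)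
include hdp

lemma strictMonoOn : StrictMonoOn δ (Set.Iic m) :=
  fun i _ j hj hij => hdp.mono i j hij hj

lemma pos {j : ℕ} (hj : 1 ≤ j) (hjm : j ≤ m) : 0 < δ j :=
  hdp.zero ▸ hdp.mono 0 j hj hjm

lemma exists_index_of_deg_pos {u : V} (hu : 0 < G.deg u) :
    ∃ c, 1 ≤ c ∧ c ≤ m ∧ G.deg u = δ c := by
  obtain ⟨c, hcm, hc⟩ := hdp.cover u
  refine ⟨c, Nat.one_le_iff_ne_zero.2 ?_, hcm, hc⟩
  rintro rfl
  rw [hdp.zero] at hc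
  omega

end DegreePartition

variable {m : ℕ} {δ : ℕ → ℕ}

theorem IsThreshold.le_minNeighborDeg (hG : G.IsThreshold) (hdp : G.DegreePartition m δ)
    {j : ℕ} (hj : 1 ≤ j) (hjm : j ≤ m) {v : V} (hv : G.deg v = δ j) :
    δ (m + 1 - j) ≤ G.minNeighborDeg v := by
  have hvpos : 0 < G.deg v := hv ▸ hdp.pos hj hjm
  obtain ⟨u, hvu, hu⟩ := exists_adj_deg_eq_minNeighborDeg hvpos
  obtain ⟨c, hc1, hcm, hcu⟩ := hdp.exists_index_of_deg_pos (deg_pos_of_adj hvu.symm)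
  rw [← hu, hcu]
  suffices m + 1 - j ≤ c from
    hdp.strictMonoOn.monotoneOn (by simp only [Set.mem_Iic]; omega) hcm this
  -- `μ` drops strictly from `D_j` to `D_{j+1}`, and its values lie among `δ 1 < ⋯ < δ m`.
  rcases hjm.lt_or_eq with hjm | rfl
  · obtain ⟨w, hw⟩ := hdp.attained (j + 1) (by omega) hjm
    have hwv : G.minNeighborDeg w < G.minNeighborDeg v :=
      hG.minNeighborDeg_lt_of_deg_lt hvpos (hv ▸ hw ▸ hdp.mono j (j + 1) (by omega) hjm)
    have hw : δ (m - j) ≤ G.minNeighborDeg w := by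
      simpa using hG.le_minNeighborDeg hdp (j := j + 1) (by omega) hjm hw
    have hδ : δ (m - j) < δ c := by omega
    have := (hdp.strictMonoOn.lt_iff_lt (by simp only [Set.mem_Iic]; omega) hcm).1 hδ
    omega
  · omega
termination_by m - j

theorem IsThreshold.adj_of_adj_of_adj (hG : G.IsThreshold) (hdp : G.DegreePartition m δ)
    {k : ℕ} (hk : 1 ≤ k) (hkm : k ≤ m) {x y a b : V} (hx : G.deg x = δ k)
    (hy : G.deg y = δ (m + 1 - k)) (hya : G.Adj y a) (hxb : G.Adj x b) (hab : a ≠ b) :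
    G.Adj a b :=
  (hG.adj_of_deg_le hya (hy ▸ (hG.le_minNeighborDeg hdp hk hkm hx).trans (minNeighborDeg_le hxb))
    hab.symm).symm

end Threshold

namespace Walk

variable {V : Type} [DecidableEq V] {G : SimpleGraph V}

lemma IsHamiltonian.of_support_perm {u v u' v' : V} {p : G.Walk u v} {q : G.Walk u' v'}
    (hp : p.IsHamiltonian) (h : q.support.Perm p.support) : q.IsHamiltonian :=
  fun a => h.count_eq a ▸ hp a

lemma IsHamiltonian.isHamiltonianCycle_cons {u v : V} {p : G.Walk u v} (hp : p.IsHamiltonian)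
    (h : G.Adj v u) (hvu : s(v, u) ∉ p.edges) : (cons h p).IsHamiltonianCycle :=
  ⟨(cons_isCycle_iff p h).2 ⟨hp.isPath, hvu⟩, fun a => by simpa using hp a⟩

lemma IsHamiltonian.reverse_append_cons {a x b y : V} {p : G.Walk a x} {r : G.Walk b y}
    {hxb : G.Adj x b} (h : (p.append (cons hxb r)).IsHamiltonian) (hab : G.Adj a b) :
    (p.reverse.append (cons hab r)).IsHamiltonian :=
  h.of_support_perm (by simpa [support_append] using p.support.reverse_perm.append_right _)

theorem exists_isHamiltonianCycle_mem_edges {x y : V} (hxy : G.Adj x y)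
    (hswap : ∀ a b, G.Adj y a → G.Adj x b → a ≠ b → G.Adj a b)
    {c : G.Walk y y} (hc : c.IsHamiltonianCycle) :
    ∃ c' : G.Walk y y, c'.IsHamiltonianCycle ∧ s(x, y) ∈ c'.edges := by
  by_cases hxyc : s(x, y) ∈ c.edges
  · exact ⟨c, hc, hxyc⟩
  -- Write `c = y a ⋯ x b ⋯ y` and reverse the segment `a ⋯ x`.
  obtain ⟨a, hya, q, rfl⟩ := not_nil_iff.1 hc.not_nil
  have hq : q.IsHamiltonian := fun a => by simpa using hc.isHamiltonian_tail a
  have hxq := hq.mem_support x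
  obtain ⟨b, hxb, r, hr⟩ := not_nil_iff.1 (not_nil_of_ne hxy.ne : ¬(q.dropUntil x hxq).Nil)
  have hq_eq : q = (q.takeUntil x hxq).append (cons hxb r) := by rw [← hr, take_spec]
  set p := q.takeUntil x hxq
  rw [hq_eq] at hxyc hq
  simp only [edges_cons, edges_append, List.mem_cons, List.mem_append, Sym2.eq_iff] at hxyc
  have hab : a ≠ b := by
    have := hq.isPath.support_nodup
    rw [support_append, support_cons, List.tail_cons, List.nodup_append] at this
    exact this.2.2 a p.start_mem_support b r.start_mem_support
  refine ⟨cons hxy.symm (p.reverse.append (cons (hswap a b hya hxb hab) r)),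
    (hq.reverse_append_cons _).isHamiltonianCycle_cons _ ?_, by simp⟩
  simp only [edges_cons, edges_append, edges_reverse, List.mem_cons, List.mem_append,
    List.mem_reverse, Sym2.eq_iff, Sym2.eq_swap (a := y)]
  grind [hya.ne]

end Walk

section HamCycleCount

variable {V : Type} [DecidableEq V]

def hamCycleEdgeSets (G : SimpleGraph V) : Set (Finset (Sym2 V)) :=
  {s | ∃ (v : V) (w : G.Walk v v), w.IsHamiltonianCycle ∧ w.edges.toFinset = s}

lemma hamCycleCount_eq_ncard [Fintype V] (G : SimpleGraph V) :
    G.hamCycleCount = G.hamCycleEdgeSets.ncard :=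
  Nat.card_coe_set_eq _

lemma hamCycleEdgeSets_mono {H G : SimpleGraph V} (h : H ≤ G) :
    H.hamCycleEdgeSets ⊆ G.hamCycleEdgeSets := by
  rintro s ⟨v, w, hw, rfl⟩
  exact ⟨v, w.mapLe h, hw.map Function.bijective_id, by simp⟩

theorem hamCycleCount_lt_of_le [Fintype V] {H G : SimpleGraph V} (h : H ≤ G) {v : V}
    {c : G.Walk v v} (hc : c.IsHamiltonianCycle) {e : Sym2 V} (he : e ∈ c.edges)
    (heH : e ∉ H.edgeSet) :
    H.hamCycleCount < G.hamCycleCount := by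
  rw [hamCycleCount_eq_ncard, hamCycleCount_eq_ncard]
  refine Set.ncard_lt_ncard ((Set.ssubset_iff_of_subset (hamCycleEdgeSets_mono h)).2
    ⟨_, ⟨v, c, hc, rfl⟩, ?_⟩) (Set.toFinite _)
  rintro ⟨u, w, -, hw⟩
  exact heH (w.edges_subset_edgeSet (by rwa [← List.mem_toFinset, hw, List.mem_toFinset]))

end HamCycleCount

end SimpleGraph

theorem stmt6_general {V : Type} [Fintype V] [DecidableEq V] (G : SimpleGraph V)
    (m : ℕ) (δ : ℕ → ℕ) (hG : G.IsThreshold) (hdp : G.DegreePartition m δ)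
    (hham : G.IsHamiltonian) (e : Sym2 V) (he : G.IsKeyEdge m δ e) :
    (G.deleteEdges {e}).hamCycleCount < G.hamCycleCount := by
  obtain ⟨hxy, x, y, k, rfl, hk1, hkm, hx, hy⟩ := he
  have : Nontrivial V := ⟨x, y, G.ne_of_adj hxy⟩
  obtain ⟨c, hc⟩ := hham.exists_isHamiltonianCycle y
  obtain ⟨c', hc', hxyc'⟩ := Walk.exists_isHamiltonianCycle_mem_edges hxy
    (fun a b => hG.adj_of_adj_of_adj hdp hk1 (by omega) hx hy) hc
  exact hamCycleCount_lt_of_le (G.deleteEdges_le _) hc' hxyc' (by simp)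

/-- if `G` is a hamiltonian threshold graph and `e` is a key edge such that
Golumbic's degree-partition inequalities still hold for `G - e`, then `G - e` has strictly
fewer Hamilton cycles than `G`. -/
theorem stmt6 {V : Type} [Fintype V] [DecidableEq V] (G : SimpleGraph V)
    (m : ℕ) (δ : ℕ → ℕ) (hG : G.IsThreshold) (hdp : G.DegreePartition m δ)
    (hham : G.IsHamiltonian) (e : Sym2 V) (he : G.IsKeyEdge m δ e)
    (m' : ℕ) (δ' : ℕ → ℕ) (hdp' : (G.deleteEdges {e}).DegreePartition m' δ')
    (h0 : (G.deleteEdges {e}).Dset δ' 0 = ∅)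
    (hlt : ∀ k, 1 ≤ k → k ≤ (m' - 1) / 2 →
      ∑ j ∈ Finset.Icc 1 k, ((G.deleteEdges {e}).Dset δ' j).card <
        ∑ j ∈ Finset.Icc 1 k, ((G.deleteEdges {e}).Dset δ' (m' + 1 - j)).card)
    (hle : Even m' →
      ∑ j ∈ Finset.Icc 1 (m' / 2), ((G.deleteEdges {e}).Dset δ' j).card ≤
        ∑ j ∈ Finset.Icc 1 (m' / 2), ((G.deleteEdges {e}).Dset δ' (m' + 1 - j)).card) :
    (G.deleteEdges {e}).hamCycleCount < G.hamCycleCount :=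
  stmt6_general G m δ hG hdp hham e he
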